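/- arXiv:2209.08862 — 4 statements merged into one kernel-verified Lean document; each statement's English description precedes it below -/
import Mathlib

section
/- Let a : ℕ → ℝ be nonnegative with ∑_{i=0}^∞ (i+1)(i+r+1) a_i < ∞ for some r ≥ 0. Then k³ · (min_{0 ≤ i ≤ k} a_i) → 0 as k → ∞. -/
/-! Put `b i = (i + 1)² a i`, a summable sequence. Every `a i` with `k/2 < i ≤ k` is at least
`m = min_{i ≤ k} a i`, so the roughly `k/2` terms `b i` in that window are each at least about
`(k/2)² m`. Hence `k³ m` is at most `8` times the sum of `b` over the window, which tends to `0`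
because the window lies beyond `k/2`, in the tail of a convergent series. -/

open Filter Finset Topology

theorem Summable.tendsto_sum_Ico_half {G : Type*} [AddCommGroup G] [TopologicalSpace G]
    [IsTopologicalAddGroup G] [T2Space G] {f : ℕ → G} (hf : Summable f) :
    Tendsto (fun k : ℕ => ∑ i ∈ Ico (k / 2 + 1) (k + 1), f i) atTop (𝓝 0) := by
  have hpartial := hf.tendsto_sum_tsum_nat
  have hhalf : Tendsto (fun k : ℕ => k / 2 + 1) atTop atTop :=
    tendsto_atTop_atTop.2 fun n => ⟨2 * n, fun k hk => by omega⟩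
  have hdiff := (hpartial.comp (tendsto_add_atTop_nat 1)).sub (hpartial.comp hhalf)
  rw [sub_self] at hdiff
  refine hdiff.congr fun k => ?_
  exact (sum_Ico_eq_sub f (by simp only; omega)).symm

theorem Nat.cube_le_eight_mul_sub_half_mul_sq (k : ℕ) :
    k ^ 3 ≤ 8 * (k + 1 - (k / 2 + 1)) * (k / 2 + 1) ^ 2 := by
  have h₁ : k ≤ 2 * (k + 1 - (k / 2 + 1)) := by omega
  have h₂ : k ≤ 2 * (k / 2 + 1) := by omega
  calc k ^ 3 = k * k * k := by ring
    _ ≤ 2 * (k + 1 - (k / 2 + 1)) * (2 * (k / 2 + 1)) * (2 * (k / 2 + 1)) := by gcongr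
    _ = 8 * (k + 1 - (k / 2 + 1)) * (k / 2 + 1) ^ 2 := by ring

theorem cube_mul_inf'_range_le (a : ℕ → ℝ) (ha : ∀ i, 0 ≤ a i) (k : ℕ) :
    (k : ℝ) ^ 3 * (range (k + 1)).inf' nonempty_range_add_one a ≤
      8 * ∑ i ∈ Ico (k / 2 + 1) (k + 1), ((i : ℝ) + 1) ^ 2 * a i := by
  set m := (range (k + 1)).inf' nonempty_range_add_one a
  have hm : 0 ≤ m := le_inf' _ _ fun i _ => ha i
  have hterm : ∀ i ∈ Ico (k / 2 + 1) (k + 1),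
      ((k / 2 : ℕ) + 1 : ℝ) ^ 2 * m ≤ ((i : ℝ) + 1) ^ 2 * a i := by
    intro i hi
    rw [mem_Ico] at hi
    have hki : ((k / 2 : ℕ) : ℝ) ≤ i := by exact_mod_cast (by omega : k / 2 ≤ i)
    gcongr
    exact inf'_le a (mem_range.2 hi.2)
  have hcube : (k : ℝ) ^ 3 ≤ 8 * ((k + 1 - (k / 2 + 1) : ℕ) : ℝ) * ((k / 2 : ℕ) + 1 : ℝ) ^ 2 := by
    exact_mod_cast Nat.cube_le_eight_mul_sub_half_mul_sq k
  calc (k : ℝ) ^ 3 * m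
        ≤ 8 * ((k + 1 - (k / 2 + 1) : ℕ) : ℝ) * ((k / 2 : ℕ) + 1 : ℝ) ^ 2 * m := by gcongr
    _ = 8 * ((Ico (k / 2 + 1) (k + 1)).card • (((k / 2 : ℕ) + 1 : ℝ) ^ 2 * m)) := by
        rw [Nat.card_Ico, nsmul_eq_mul]; ring
    _ ≤ 8 * ∑ i ∈ Ico (k / 2 + 1) (k + 1), ((i : ℝ) + 1) ^ 2 * a i := by
        gcongr; exact card_nsmul_le_sum _ _ _ hterm

theorem stmt_2 (a : ℕ → ℝ) (ha : ∀ i, 0 ≤ a i) (r : ℝ) (hr : 0 ≤ r)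
    (hsum : Summable fun i : ℕ => ((i : ℝ) + 1) * ((i : ℝ) + r + 1) * a i) :
    Filter.Tendsto
      (fun k : ℕ => (k : ℝ) ^ 3 * (Finset.range (k + 1)).inf' Finset.nonempty_range_add_one a)
      Filter.atTop (nhds 0) := by
  have hb : Summable fun i : ℕ => ((i : ℝ) + 1) ^ 2 * a i := by
    refine hsum.of_nonneg_of_le (fun i => by have := ha i; positivity) fun i => ?_
    have := ha i
    rw [sq]
    gcongr
    linarith
  have hwindow := hb.tendsto_sum_Ico_half.const_mul 8
  rw [mul_zero] at hwindow
  refine squeeze_zero (fun k => ?_) (cube_mul_inf'_range_le a ha) hwindow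
  have : 0 ≤ (range (k + 1)).inf' nonempty_range_add_one a := le_inf' _ _ fun i _ => ha i
  positivity
end

section
/- Let b : ℕ → ℝ be nonnegative with ∑_{i=0}^∞ i · b_i < ∞. Then k² · (min_{0 ≤ i ≤ k} b_i) → 0 as k → ∞. -/
/-!
On the window `⌈k/2⌉ ≤ i ≤ k`, which has at least `k/2` indices, every term `i * b i` is at least
`(k/2) * min_{i ≤ k} b i`; hence `k² * min_{i ≤ k} b i` is at most four times the sum of `i * b i`
over that window. Such window sums are differences of partial sums of a convergent series whose
endpoints both tend to infinity, so they tend to `0`.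
-/

open Filter Finset Topology

theorem Summable.tendsto_sum_Ico_zero {G : Type*} [AddCommGroup G] [TopologicalSpace G]
    [IsTopologicalAddGroup G] {f : ℕ → G} (hf : Summable f) {a c : ℕ → ℕ}
    (ha : Tendsto a atTop atTop) (hc : Tendsto c atTop atTop) (hac : ∀ k, a k ≤ c k) :
    Tendsto (fun k ↦ ∑ i ∈ Ico (a k) (c k), f i) atTop (𝓝 0) := by
  have hlim := (hf.tendsto_sum_tsum_nat.comp hc).sub (hf.tendsto_sum_tsum_nat.comp ha)
  rw [sub_self] at hlim
  refine hlim.congr fun k ↦ ?_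
  exact (sum_Ico_eq_sub f (hac k)).symm

theorem sq_mul_inf'_range_le_four_mul_sum_Ico (b : ℕ → ℝ) (hb : ∀ i, 0 ≤ b i) (k : ℕ) :
    (k : ℝ) ^ 2 * (range (k + 1)).inf' nonempty_range_add_one b ≤
      4 * ∑ i ∈ Ico ((k + 1) / 2) (k + 1), (i : ℝ) * b i := by
  set m := (range (k + 1)).inf' nonempty_range_add_one b
  set s := Ico ((k + 1) / 2) (k + 1)
  have hm : 0 ≤ m := le_inf' _ _ fun i _ ↦ hb i
  have hcard : (k : ℝ) ≤ 2 * #s := by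
    have : k ≤ 2 * #s := by rw [Nat.card_Ico]; omega
    exact_mod_cast this
  have hterm : ∀ i ∈ s, (k : ℝ) * m ≤ 2 * i * b i := by
    intro i hi
    have hki : (k : ℝ) ≤ 2 * i := by
      have : k ≤ 2 * i := by rw [mem_Ico] at hi; omega
      exact_mod_cast this
    have hmi : m ≤ b i := inf'_le _ (mem_range.mpr (mem_Ico.mp hi).2)
    exact mul_le_mul hki hmi hm (by positivity)
  calc (k : ℝ) ^ 2 * m = k * (k * m) := by ring
    _ ≤ (2 * #s) * (k * m) := by gcongr
    _ = 2 * ∑ _i ∈ s, (k : ℝ) * m := by rw [sum_const, nsmul_eq_mul]; ring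
    _ ≤ 2 * ∑ i ∈ s, 2 * (i : ℝ) * b i := by gcongr 2 * ?_; exact sum_le_sum hterm
    _ = 4 * ∑ i ∈ s, (i : ℝ) * b i := by simp only [mul_assoc, ← mul_sum]; ring

theorem stmt_3 (b : ℕ → ℝ) (hb : ∀ i, 0 ≤ b i)
    (hsum : Summable fun i : ℕ => (i : ℝ) * b i) :
    Filter.Tendsto
      (fun k : ℕ => (k : ℝ) ^ 2 * (Finset.range (k + 1)).inf' Finset.nonempty_range_add_one b)
      Filter.atTop (nhds 0) := by
  have hwindow : Tendsto (fun k : ℕ ↦ ∑ i ∈ Ico ((k + 1) / 2) (k + 1), (i : ℝ) * b i) atTop (𝓝 0) :=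
    hsum.tendsto_sum_Ico_zero ((Nat.tendsto_div_const_atTop two_ne_zero).comp
      (tendsto_add_atTop_nat 1)) (tendsto_add_atTop_nat 1) fun k ↦ Nat.div_le_self _ _
  have hupper := hwindow.const_mul 4
  rw [mul_zero] at hupper
  refine tendsto_of_tendsto_of_tendsto_of_le_of_le tendsto_const_nhds hupper (fun k ↦ ?_)
    (sq_mul_inf'_range_le_four_mul_sum_Ico b hb)
  exact mul_nonneg (by positivity) (le_inf' _ _ fun i _ ↦ hb i)
end

section
/- Let f ∈ F_L^1(ℝ^d) (L-smooth convex) and 0 < s ≤ 1/L, r ≥ 2. Define the NAG iterates x_k = y_{k-1} - s∇f(y_{k-1}), y_k = x_k + ((k-1)/(k+r))(x_k - x_{k-1}) with x_0 = y_0. Define v_{k-1} = (y_k - y_{k-1})/√s and the Lyapunov function E(k) = s·k·(k+r)(f(y_{k-1}) - f(x*)) + (1/2)‖√s·k·v_{k-1} + r(y_k - x*) + s·k·∇f(y_{k-1})‖². Then E(k+1) ≤ E(k) for all k ≥ 1. -/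
/-!
Let `p_k` be the vector inside the norm of `E(k)`. The NAG recursion gives
`p_{k+1} = p_k - s (k + r) ∇f(y_k)`, so `E(k+1) - E(k)` is controlled by `⟪p_k, ∇f(y_k)⟫`.
This inner product is bounded below by the cocoercivity inequality
`f z + ⟪∇f z, w - z⟫ + s/2 ‖∇f w - ∇f z‖² ≤ f w` (valid for `s ≤ 1/L`), taken at
`w = y_{k-1}` and `w = x*`; the remainder is nonpositive because `r ≥ 2`.
-/

open Set RealInnerProductSpace

section Smooth

variable {E : Type*} [NormedAddCommGroup E] [InnerProductSpace ℝ E] [CompleteSpace E]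
  {f : E → ℝ} {g : E → E} {L s : ℝ}

theorem HasGradientAt.hasDerivAt_comp_add_smul {g' a c : E} {t : ℝ}
    (hf : HasGradientAt f g' (a + t • c)) :
    HasDerivAt (fun τ : ℝ => f (a + τ • c)) ⟪g', c⟫ t := by
  have hline : HasDerivAt (fun τ : ℝ => a + τ • c) c t := by
    simpa using ((hasDerivAt_id t).smul_const c).const_add a
  have hcomp := hf.hasFDerivAt.comp_hasDerivAt t hline
  simp only [Function.comp_def, InnerProductSpace.toDual_apply_apply] at hcomp
  exact hcomp

theorem IsLocalMin.hasGradientAt_eq_zero {g' x : E} (h : IsLocalMin f x)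
    (hf : HasGradientAt f g' x) : g' = 0 :=
  (InnerProductSpace.toDual ℝ E).map_eq_zero_iff.mp (h.hasFDerivAt_eq_zero hf.hasFDerivAt)

theorem ConvexOn.add_inner_le_of_hasGradientAt {g' z : E} (hf : ConvexOn ℝ univ f)
    (hg : HasGradientAt f g' z) (w : E) : f z + ⟪g', w - z⟫ ≤ f w := by
  have hline : ConvexOn ℝ univ (fun t : ℝ => f (z + t • (w - z))) := by
    have := hf.comp_affineMap (AffineMap.lineMap z w)
    simp only [preimage_univ, Function.comp_def, AffineMap.lineMap_apply_module'] at this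
    simpa only [add_comm] using this
  have hderiv : HasDerivAt (fun t : ℝ => f (z + t • (w - z))) ⟪g', w - z⟫ 0 :=
    HasGradientAt.hasDerivAt_comp_add_smul (by simpa using hg)
  have := hline.le_slope_of_hasDerivAt (mem_univ 0) (mem_univ 1) one_pos hderiv
  simp only [slope_def_field] at this
  norm_num at this
  linarith

theorem le_add_inner_add_sq_of_lipschitz_gradient (hg : ∀ z, HasGradientAt f (g z) z)
    (hlip : ∀ z w, ‖g z - g w‖ ≤ L * ‖z - w‖) (a c : E) :
    f (a + c) ≤ f a + ⟪g a, c⟫ + L / 2 * ‖c‖ ^ 2 := by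
  set ψ : ℝ → ℝ := fun t => f (a + t • c) - t * ⟪g a, c⟫ - L / 2 * t ^ 2 * ‖c‖ ^ 2
  have hψ : ∀ t, HasDerivAt ψ (⟪g (a + t • c), c⟫ - ⟪g a, c⟫ - L * t * ‖c‖ ^ 2) t := by
    intro t
    have hlin : HasDerivAt (fun t : ℝ => t * ⟪g a, c⟫) ⟪g a, c⟫ t := by
      simpa using (hasDerivAt_id t).mul_const ⟪g a, c⟫
    have hquad : HasDerivAt (fun t : ℝ => L / 2 * t ^ 2 * ‖c‖ ^ 2) (L * t * ‖c‖ ^ 2) t := by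
      refine (((hasDerivAt_pow 2 t).const_mul (L / 2)).mul_const (‖c‖ ^ 2)).congr_deriv ?_
      ring
    exact ((hg _).hasDerivAt_comp_add_smul.sub hlin).sub hquad
  have hanti : AntitoneOn ψ (Icc 0 1) := by
    refine antitoneOn_of_hasDerivWithinAt_nonpos (convex_Icc 0 1)
      (fun t _ => (hψ t).continuousAt.continuousWithinAt) (fun t _ => (hψ t).hasDerivWithinAt)
      fun t ht => ?_
    rw [interior_Icc] at ht
    have hnorm : ‖g (a + t • c) - g a‖ ≤ L * (t * ‖c‖) := by
      simpa [norm_smul, abs_of_pos ht.1] using hlip (a + t • c) a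
    have hcs := real_inner_le_norm (g (a + t • c) - g a) c
    rw [inner_sub_left] at hcs
    nlinarith [mul_le_mul_of_nonneg_right hnorm (norm_nonneg c)]
  have := hanti (left_mem_Icc.mpr zero_le_one) (right_mem_Icc.mpr zero_le_one) zero_le_one
  simp only [ψ] at this
  norm_num at this
  linarith

theorem add_sq_norm_gradient_le_of_forall_le (hg : ∀ z, HasGradientAt f (g z) z)
    (hlip : ∀ z w, ‖g z - g w‖ ≤ L * ‖z - w‖) {z : E} (hmin : ∀ u, f z ≤ f u)
    (hs : 0 ≤ s) (hsL : s * L ≤ 1) (w : E) :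
    f z + s / 2 * ‖g w‖ ^ 2 ≤ f w := by
  have hstep := le_add_inner_add_sq_of_lipschitz_gradient hg hlip w (-(s • g w))
  rw [inner_neg_right, real_inner_smul_right, real_inner_self_eq_norm_sq, norm_neg, norm_smul,
    Real.norm_eq_abs, abs_of_nonneg hs] at hstep
  have := hmin (w + -(s • g w))
  nlinarith [mul_nonneg (sub_nonneg.mpr hsL) (mul_nonneg hs (sq_nonneg ‖g w‖))]

theorem ConvexOn.add_inner_add_sq_le_of_lipschitz_gradient (hf : ConvexOn ℝ univ f)
    (hg : ∀ z, HasGradientAt f (g z) z) (hlip : ∀ z w, ‖g z - g w‖ ≤ L * ‖z - w‖)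
    (hs : 0 ≤ s) (hsL : s * L ≤ 1) (z w : E) :
    f z + ⟪g z, w - z⟫ + s / 2 * ‖g w - g z‖ ^ 2 ≤ f w := by
  have htilt : ∀ u, HasGradientAt (fun u => f u - ⟪g z, u⟫) (g u - g z) u := by
    intro u
    rw [hasGradientAt_iff_hasFDerivAt]
    refine ((hg u).hasFDerivAt.sub (InnerProductSpace.toDual ℝ E (g z)).hasFDerivAt).congr_fderiv ?_
    simp
  have hmin : ∀ u, f z - ⟪g z, z⟫ ≤ f u - ⟪g z, u⟫ := by
    intro u
    have := hf.add_inner_le_of_hasGradientAt (hg z) u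
    rw [inner_sub_right] at this
    linarith
  have := add_sq_norm_gradient_le_of_forall_le htilt
    (fun u u' => by simpa only [sub_sub_sub_cancel_right] using hlip u u') hmin hs hsL w
  rw [inner_sub_right]
  linarith

end Smooth

section Nesterov

variable {E : Type*} [NormedAddCommGroup E] [InnerProductSpace ℝ E]

/-- `nagLyapunov f g xs s r k (y (k-1)) (y k)` is the paper's `E(k)`, and `nagMomentum` the vector
inside its norm, using `√s k v_{k-1} = k (y_k - y_{k-1})`. -/
def nagMomentum (g : E → E) (xs : E) (s r a : ℝ) (y₀ y₁ : E) : E :=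
  a • (y₁ - y₀) + r • (y₁ - xs) + (s * a) • g y₀

noncomputable def nagLyapunov (f : E → ℝ) (g : E → E) (xs : E) (s r a : ℝ) (y₀ y₁ : E) : ℝ :=
  s * a * (a + r) * (f y₀ - f xs) + 1 / 2 * ‖nagMomentum g xs s r a y₀ y₁‖ ^ 2

variable {f : E → ℝ} {g : E → E} {xs : E} {s r a : ℝ}

theorem nagMomentum_succ {y₀ y₁ y₂ x₁ x₂ : E} (hden : a + r + 1 ≠ 0)
    (hx₁ : x₁ = y₀ - s • g y₀) (hx₂ : x₂ = y₁ - s • g y₁)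
    (hy₂ : y₂ = x₂ + (a / (a + r + 1)) • (x₂ - x₁)) :
    nagMomentum g xs s r (a + 1) y₁ y₂ = nagMomentum g xs s r a y₀ y₁ - (s * (a + r)) • g y₁ := by
  subst hx₁ hx₂ hy₂
  unfold nagMomentum
  match_scalars <;> field_simp <;> ring

theorem inner_nagMomentum_ge
    (hcoco : ∀ z w, f z + ⟪g z, w - z⟫ + s / 2 * ‖g w - g z‖ ^ 2 ≤ f w) (hxs : g xs = 0)
    (ha : 0 ≤ a) (hr : 0 ≤ r) (y₀ y₁ : E) :
    (a + r) * (f y₁ - f xs) - a * (f y₀ - f xs) + s * (a + r) / 2 * ‖g y₁‖ ^ 2 +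
        s * a / 2 * ‖g y₀‖ ^ 2 ≤ ⟪nagMomentum g xs s r a y₀ y₁, g y₁⟫ := by
  have hback := hcoco y₁ y₀
  have hopt := hcoco y₁ xs
  rw [← neg_sub, inner_neg_right, real_inner_comm] at hback hopt
  rw [hxs, zero_sub, norm_neg] at hopt
  have hpolar : s * a * ⟪g y₀, g y₁⟫ =
      s * a / 2 * (‖g y₀‖ ^ 2 + ‖g y₁‖ ^ 2 - ‖g y₀ - g y₁‖ ^ 2) := by
    rw [norm_sub_sq_real]
    ring
  simp only [nagMomentum, inner_add_left, real_inner_smul_left]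
  linarith [mul_le_mul_of_nonneg_left hback ha, mul_le_mul_of_nonneg_left hopt hr]

theorem nagLyapunov_succ_le
    (hcoco : ∀ z w, f z + ⟪g z, w - z⟫ + s / 2 * ‖g w - g z‖ ^ 2 ≤ f w) (hxs : g xs = 0)
    (hs : 0 ≤ s) (hr : 2 ≤ r) (ha : 0 ≤ a) {y₀ y₁ y₂ : E} (hmin : f xs ≤ f y₁)
    (hstep : nagMomentum g xs s r (a + 1) y₁ y₂ =
      nagMomentum g xs s r a y₀ y₁ - (s * (a + r)) • g y₁) :
    nagLyapunov f g xs s r (a + 1) y₁ y₂ ≤ nagLyapunov f g xs s r a y₀ y₁ := by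
  have hinner := inner_nagMomentum_ge hcoco hxs ha (r := r) (by linarith) y₀ y₁
  have hexpand := norm_sub_sq_real (nagMomentum g xs s r a y₀ y₁) ((s * (a + r)) • g y₁)
  rw [real_inner_smul_right, norm_smul, Real.norm_eq_abs, mul_pow, sq_abs] at hexpand
  have hweight : 0 ≤ (a + r) ^ 2 - (a + 1) * (a + 1 + r) := by
    nlinarith [mul_nonneg ha (by linarith : 0 ≤ r - 2),
      mul_nonneg (by linarith : 0 ≤ r - 2) (by linarith : 0 ≤ r - 1)]
  unfold nagLyapunov
  rw [hstep, hexpand]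
  nlinarith [mul_le_mul_of_nonneg_left hinner (by positivity : 0 ≤ s * (a + r)),
    mul_nonneg (mul_nonneg hs hweight) (sub_nonneg.mpr hmin),
    mul_nonneg (mul_nonneg (mul_nonneg (mul_nonneg hs hs) ha) (by linarith : 0 ≤ a + r))
      (sq_nonneg ‖g y₀‖)]

end Nesterov

theorem stmt_5_general {d : ℕ} (f : EuclideanSpace ℝ (Fin d) → ℝ)
    (g : EuclideanSpace ℝ (Fin d) → EuclideanSpace ℝ (Fin d)) (L : ℝ)
    (hconv : ConvexOn ℝ Set.univ f)
    (hgrad : ∀ z, HasGradientAt f (g z) z)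
    (hlip : ∀ z w, ‖g z - g w‖ ≤ L * ‖z - w‖)
    (xs : EuclideanSpace ℝ (Fin d)) (hmin : ∀ z, f xs ≤ f z)
    (s r : ℝ) (hs : 0 < s) (hsL : s ≤ 1 / L) (hr : 2 ≤ r)
    (x y : ℕ → EuclideanSpace ℝ (Fin d))
    (hx : ∀ k : ℕ, x (k + 1) = y k - s • g (y k))
    (hy : ∀ k : ℕ, y (k + 1) = x (k + 1) + (((k : ℝ)) / ((k : ℝ) + r + 1)) • (x (k + 1) - x k))
    (v : ℕ → EuclideanSpace ℝ (Fin d))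
    (hv : ∀ k : ℕ, v k = (Real.sqrt s)⁻¹ • (y (k + 1) - y k)) :
    ∀ k : ℕ,
      s * ((k : ℝ) + 2) * ((k : ℝ) + 2 + r) * (f (y (k + 1)) - f xs) +
          (1 / 2) * ‖(Real.sqrt s * ((k : ℝ) + 2)) • v (k + 1) + r • (y (k + 2) - xs) +
              (s * ((k : ℝ) + 2)) • g (y (k + 1))‖ ^ 2 ≤
        s * ((k : ℝ) + 1) * ((k : ℝ) + 1 + r) * (f (y k) - f xs) +
          (1 / 2) * ‖(Real.sqrt s * ((k : ℝ) + 1)) • v k + r • (y (k + 1) - xs) +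
              (s * ((k : ℝ) + 1)) • g (y k)‖ ^ 2 := by
  intro k
  have hL : 0 < L := one_div_pos.mp (hs.trans_le hsL)
  have hcoco := hconv.add_inner_add_sq_le_of_lipschitz_gradient hgrad hlip hs.le
    ((le_div_iff₀ hL).mp hsL)
  have hxs : g xs = 0 := IsLocalMin.hasGradientAt_eq_zero (.of_forall hmin) (hgrad xs)
  have hvy : ∀ (a : ℝ) j, (Real.sqrt s * a) • v j = a • (y (j + 1) - y j) := fun a j => by
    rw [hv, smul_smul, mul_right_comm, mul_inv_cancel₀ (Real.sqrt_pos.mpr hs).ne', one_mul]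
  have hy' := hy (k + 1)
  push_cast at hy'
  have hstep := nagMomentum_succ (xs := xs) (by positivity) (hx k) (hx (k + 1)) hy'
  have := nagLyapunov_succ_le hcoco hxs hs.le hr (by positivity) (hmin (y (k + 1))) hstep
  rw [show (k : ℝ) + 1 + 1 = k + 2 by ring] at this
  rwa [hvy, hvy]

theorem stmt_5 {d : ℕ} (f : EuclideanSpace ℝ (Fin d) → ℝ)
    (g : EuclideanSpace ℝ (Fin d) → EuclideanSpace ℝ (Fin d)) (L : ℝ) (hL : 0 < L)
    (hconv : ConvexOn ℝ Set.univ f)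
    (hgrad : ∀ z, HasGradientAt f (g z) z)
    (hlip : ∀ z w, ‖g z - g w‖ ≤ L * ‖z - w‖)
    (xs : EuclideanSpace ℝ (Fin d)) (hmin : ∀ z, f xs ≤ f z)
    (s r : ℝ) (hs : 0 < s) (hsL : s ≤ 1 / L) (hr : 2 ≤ r)
    (x y : ℕ → EuclideanSpace ℝ (Fin d))
    (hx0 : x 0 = y 0)
    (hx : ∀ k : ℕ, x (k + 1) = y k - s • g (y k))
    (hy : ∀ k : ℕ, y (k + 1) = x (k + 1) + (((k : ℝ)) / ((k : ℝ) + r + 1)) • (x (k + 1) - x k))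
    (v : ℕ → EuclideanSpace ℝ (Fin d))
    (hv : ∀ k : ℕ, v k = (Real.sqrt s)⁻¹ • (y (k + 1) - y k)) :
    ∀ k : ℕ,
      s * ((k : ℝ) + 2) * ((k : ℝ) + 2 + r) * (f (y (k + 1)) - f xs) +
          (1 / 2) * ‖(Real.sqrt s * ((k : ℝ) + 2)) • v (k + 1) + r • (y (k + 2) - xs) +
              (s * ((k : ℝ) + 2)) • g (y (k + 1))‖ ^ 2 ≤
        s * ((k : ℝ) + 1) * ((k : ℝ) + 1 + r) * (f (y k) - f xs) +
          (1 / 2) * ‖(Real.sqrt s * ((k : ℝ) + 1)) • v k + r • (y (k + 1) - xs) +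
              (s * ((k : ℝ) + 1)) • g (y k)‖ ^ 2 :=
  stmt_5_general f g L hconv hgrad hlip xs hmin s r hs hsL hr x y hx hy v hv
end

section
/- Let f be continuously differentiable and convex on ℝ^d with minimizer x*, and let X : [t₀, ∞) → ℝ^d solve Ẍ + ((r+1)/t)Ẋ + [1 + (r+1)√s/(2t)]∇f(X + √s·Ẋ) = 0 with r ≥ 2, s > 0, t₀ = (r+2)√s. Then the Lyapunov function E(t) = [t(t - r√s)/(t - (r+1)√s)]·[t + (r+1)√s/2]·(f(X + √s·Ẋ) - f(x*)) + (1/2)‖tẊ + r(X - x*)‖² is nonincreasing on [t₀, ∞), and in particular f(X(t) + √s·Ẋ(t)) - f(x*) ≤ E(t₀)/t² for all t ≥ t₀. -/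
/-!
Write `v = X + √s Ẋ`, `F = f v - f x*`, `G = ∇f v`, `b = t + (r+1)√s/2` and `w` for the weight in
front of `F` in `E`. Along the ODE, `w` is exactly the weight for which the terms in `⟪G, Ẋ⟫`
cancel in `E'`, leaving
`E' = (w' - r b) F - (w √s b / t) ‖G‖² - r b (⟪G, v - x*⟫ - F)`.
Every term is `≤ 0`: the last by convexity, the first because `w' ≤ r b` once `r ≥ 2` and
`t ≥ (r+2)√s`. So `E` is nonincreasing, and `t² ≤ w` turns `E t ≤ E t₀` into the rate.
-/

open Set InnerProductSpace
open scoped RealInnerProductSpace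

variable {E : Type*} [NormedAddCommGroup E] [InnerProductSpace ℝ E]

theorem antitoneOn_Ici_of_forall_hasDerivAt_nonpos {φ : ℝ → ℝ} {a : ℝ}
    (h : ∀ t ≥ a, ∃ e, HasDerivAt φ e t ∧ e ≤ 0) : AntitoneOn φ (Ici a) := by
  choose! φ' hφ hφ' using h
  exact antitoneOn_of_hasDerivWithinAt_nonpos (convex_Ici a)
    (fun t ht ↦ (hφ t ht).continuousAt.continuousWithinAt)
    (fun t ht ↦ (hφ t (interior_subset ht)).hasDerivWithinAt)
    (fun t ht ↦ hφ' t (interior_subset ht))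

theorem ConvexOn.add_inner_sub_le_of_hasGradientAt [CompleteSpace E] {f : E → ℝ} {s : Set E}
    (hf : ConvexOn ℝ s f) {x y g : E} (hx : x ∈ s) (hy : y ∈ s) (hg : HasGradientAt f g x) :
    f x + ⟪g, y - x⟫ ≤ f y := by
  have hg' : HasFDerivAt f (toDual ℝ E g) (AffineMap.lineMap x y (0 : ℝ)) := by
    simpa using hg.hasFDerivAt
  have hline : HasDerivAt (f ∘ (AffineMap.lineMap x y : ℝ →ᵃ[ℝ] E)) ⟪g, y - x⟫ 0 := by
    simpa [toDual_apply_apply] using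
      hg'.comp_hasDerivAt (0 : ℝ) (AffineMap.hasDerivAt_lineMap (𝕜 := ℝ))
  have := (hf.comp_affineMap (AffineMap.lineMap x y)).le_slope_of_hasDerivAt
    (by simpa using hx) (by simpa using hy) zero_lt_one hline
  simp only [slope_def_field, Function.comp_apply, AffineMap.lineMap_apply_one,
    AffineMap.lineMap_apply_zero, sub_zero, div_one] at this
  linarith

noncomputable section

namespace Lyapunov

def weight (r σ t : ℝ) : ℝ := t * (t - r * σ) / (t - (r + 1) * σ) * (t + (r + 1) * σ / 2)

def weightDeriv (r σ t : ℝ) : ℝ :=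
  ((2 * t - r * σ) * (t + (r + 1) * σ / 2) + t * (t - r * σ)) / (t - (r + 1) * σ)
    - t * (t - r * σ) * (t + (r + 1) * σ / 2) / (t - (r + 1) * σ) ^ 2

theorem hasDerivAt_weight {r σ t : ℝ} (ht : t ≠ (r + 1) * σ) :
    HasDerivAt (weight r σ) (weightDeriv r σ t) t := by
  have hD : t - (r + 1) * σ ≠ 0 := sub_ne_zero.mpr ht
  refine ((((hasDerivAt_id' t).mul ((hasDerivAt_id' t).sub_const (r * σ))).div
    ((hasDerivAt_id' t).sub_const ((r + 1) * σ)) hD).mul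
      ((hasDerivAt_id' t).add_const ((r + 1) * σ / 2))).congr_deriv ?_
  simp only [Pi.mul_apply, Pi.div_apply, weightDeriv]
  field_simp
  ring

variable {r σ t : ℝ}

theorem weightDeriv_le (hσ : 0 < σ) (hr : 2 ≤ r) (ht : (r + 2) * σ ≤ t) :
    weightDeriv r σ t ≤ r * (t + (r + 1) * σ / 2) := by
  -- in the variables `r - 2`, `t - (r + 2) σ`, `σ` the numerator has nonnegative coefficients
  obtain ⟨q, hq, rfl⟩ : ∃ q, 0 ≤ q ∧ r = q + 2 := ⟨r - 2, by linarith, by ring⟩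
  obtain ⟨u, hu, rfl⟩ : ∃ u, 0 ≤ u ∧ t = u + (q + 4) * σ :=
    ⟨t - (q + 4) * σ, by linarith, by ring⟩
  have hD : 0 < u + σ := by linarith
  rw [weightDeriv, ← sub_nonneg, show u + (q + 4) * σ - (q + 2 + 1) * σ = u + σ by ring]
  field_simp
  ring_nf
  positivity

theorem sq_le_weight (hσ : 0 < σ) (hr : 2 ≤ r) (ht : (r + 2) * σ ≤ t) :
    t ^ 2 ≤ weight r σ t := by
  obtain ⟨u, hu, rfl⟩ : ∃ u, 0 ≤ u ∧ t = u + (r + 2) * σ :=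
    ⟨t - (r + 2) * σ, by linarith, by ring⟩
  have hD : 0 < u + σ := by linarith
  rw [weight, ← sub_nonneg, show u + (r + 2) * σ - (r + 1) * σ = u + σ by ring]
  field_simp
  ring_nf
  positivity

theorem weight_mul_eq (ht : t ≠ 0) (hD : t ≠ (r + 1) * σ) :
    weight r σ t * ((t - (r + 1) * σ) / t) = (t + (r + 1) * σ / 2) * (t - r * σ) := by
  obtain ⟨D, rfl⟩ : ∃ D, t = D + (r + 1) * σ := ⟨t - (r + 1) * σ, by ring⟩
  have hD' : D ≠ 0 := by rintro rfl; simp at hD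
  rw [weight, add_sub_cancel_right]
  field_simp

def energy (f : E → ℝ) (xs : E) (r σ : ℝ) (X X' : ℝ → E) (t : ℝ) : ℝ :=
  weight r σ t * (f (X t + σ • X' t) - f xs) + 1 / 2 * ‖t • X' t + r • (X t - xs)‖ ^ 2

variable {f : E → ℝ} {xs G x x' x'' : E} {X X' : ℝ → E}

theorem hasDerivAt_energy [CompleteSpace E] (hG : HasGradientAt f G (X t + σ • X' t))
    (hX : HasDerivAt X (X' t) t) (hX' : HasDerivAt X' x'' t) (hD : t ≠ (r + 1) * σ) :
    HasDerivAt (energy f xs r σ X X')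
      (weightDeriv r σ t * (f (X t + σ • X' t) - f xs) + weight r σ t * ⟪G, X' t + σ • x''⟫
        + ⟪t • X' t + r • (X t - xs), t • x'' + X' t + r • X' t⟫) t := by
  have hv : HasDerivAt (fun τ => X τ + σ • X' τ) (X' t + σ • x'') t := hX.add (hX'.const_smul σ)
  have hfv : HasDerivAt (fun τ => f (X τ + σ • X' τ)) ⟪G, X' t + σ • x''⟫ t := by
    simpa [Function.comp_def, toDual_apply_apply] using hG.hasFDerivAt.comp_hasDerivAt t hv
  have hw : HasDerivAt (fun τ : ℝ => τ • X' τ + r • (X τ - xs)) (t • x'' + X' t + r • X' t) t :=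
    (((hasDerivAt_id' t).smul hX').add ((hX.sub_const xs).const_smul r)).congr_deriv
      (by rw [one_smul])
  exact (((hasDerivAt_weight hD).mul (hfv.sub_const (f xs))).add
    (hw.norm_sq.const_mul (1 / 2))).congr_deriv (by ring)

theorem energy_deriv_eq (ht : t ≠ 0) (hD : t ≠ (r + 1) * σ)
    (hode : x'' + ((r + 1) / t) • x' + (1 + (r + 1) * σ / (2 * t)) • G = 0) :
    weight r σ t * ⟪G, x' + σ • x''⟫ + ⟪t • x' + r • (x - xs), t • x'' + x' + r • x'⟫
      = -(weight r σ t * σ * (t + (r + 1) * σ / 2) / t) * ‖G‖ ^ 2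
        - r * (t + (r + 1) * σ / 2) * ⟪G, x + σ • x' - xs⟫ := by
  have hx'' : x'' = -((r + 1) / t) • x' - (1 + (r + 1) * σ / (2 * t)) • G := by
    rw [← sub_eq_zero, ← hode]; module
  have hv : x' + σ • x'' = ((t - (r + 1) * σ) / t) • x' - (σ * (t + (r + 1) * σ / 2) / t) • G := by
    rw [hx'']
    match_scalars
    · field_simp; ring
    · field_simp
  have hw : t • x'' + x' + r • x' = -((t + (r + 1) * σ / 2) • G) := by
    rw [hx'']
    match_scalars
    · field_simp; ring
    · field_simp
  rw [hv, hw]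
  simp only [inner_add_right, inner_sub_right, inner_neg_right, inner_smul_right,
    inner_add_left, inner_sub_left, inner_smul_left, real_inner_self_eq_norm_sq,
    real_inner_comm G x', real_inner_comm G x, real_inner_comm G xs, RCLike.conj_to_real]
  linear_combination ⟪G, x'⟫ * weight_mul_eq ht hD

theorem exists_hasDerivAt_energy_nonpos [CompleteSpace E] {g : E → E} (hf : ConvexOn ℝ univ f)
    (hgrad : ∀ z, HasGradientAt f (g z) z) (hmin : ∀ z, f xs ≤ f z)
    (hσ : 0 < σ) (hr : 2 ≤ r) (ht : (r + 2) * σ ≤ t)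
    (hX : HasDerivAt X (X' t) t) (hX' : HasDerivAt X' x'' t)
    (hode : x'' + ((r + 1) / t) • X' t + (1 + (r + 1) * σ / (2 * t)) • g (X t + σ • X' t) = 0) :
    ∃ e, HasDerivAt (energy f xs r σ X X') e t ∧ e ≤ 0 := by
  set v := X t + σ • X' t
  have ht0 : 0 < t := by nlinarith
  have hD : t ≠ (r + 1) * σ := by nlinarith
  refine ⟨_, hasDerivAt_energy (hgrad v) hX hX' hD, ?_⟩
  rw [add_assoc, energy_deriv_eq ht0.ne' hD hode]
  have hF : 0 ≤ f v - f xs := sub_nonneg.mpr (hmin v)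
  have hFG : f v - f xs ≤ ⟪g v, v - xs⟫ := by
    have := hf.add_inner_sub_le_of_hasGradientAt (mem_univ v) (mem_univ xs) (hgrad v)
    rw [← neg_sub, inner_neg_right] at this
    linarith
  have hb : 0 ≤ r * (t + (r + 1) * σ / 2) := by positivity
  have hw : 0 ≤ weight r σ t := (sq_nonneg t).trans (sq_le_weight hσ hr ht)
  have hGsq : 0 ≤ weight r σ t * σ * (t + (r + 1) * σ / 2) / t * ‖g v‖ ^ 2 := by positivity
  have hF' := mul_le_mul_of_nonneg_right (weightDeriv_le hσ hr ht) hF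
  have hFG' := mul_le_mul_of_nonneg_left hFG hb
  linarith

theorem sq_mul_le_energy (hσ : 0 < σ) (hr : 2 ≤ r) (ht : (r + 2) * σ ≤ t)
    (hmin : ∀ z, f xs ≤ f z) :
    t ^ 2 * (f (X t + σ • X' t) - f xs) ≤ energy f xs r σ X X' t := by
  have hF := mul_le_mul_of_nonneg_right (sq_le_weight hσ hr ht)
    (sub_nonneg.mpr (hmin (X t + σ • X' t)))
  have hkin : 0 ≤ 1 / 2 * ‖t • X' t + r • (X t - xs)‖ ^ 2 := by positivity
  rw [energy]
  linarith

end Lyapunov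

end

open Lyapunov in
theorem stmt_18_general {d : ℕ} (f : EuclideanSpace ℝ (Fin d) → ℝ)
    (g : EuclideanSpace ℝ (Fin d) → EuclideanSpace ℝ (Fin d))
    (hconv : ConvexOn ℝ Set.univ f)
    (hgrad : ∀ z, HasGradientAt f (g z) z)
    (xs : EuclideanSpace ℝ (Fin d)) (hmin : ∀ z, f xs ≤ f z)
    (s r : ℝ) (hs : 0 < s) (hr : 2 ≤ r)
    (t₀ : ℝ) (ht₀ : t₀ = (r + 2) * Real.sqrt s)
    (X X' X'' : ℝ → EuclideanSpace ℝ (Fin d))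
    (hX : ∀ t ≥ t₀, HasDerivAt X (X' t) t)
    (hX' : ∀ t ≥ t₀, HasDerivAt X' (X'' t) t)
    (hode : ∀ t ≥ t₀,
      X'' t + ((r + 1) / t) • X' t +
        (1 + (r + 1) * Real.sqrt s / (2 * t)) • g (X t + Real.sqrt s • X' t) = 0) :
    AntitoneOn
      (fun t : ℝ =>
        (t * (t - r * Real.sqrt s) / (t - (r + 1) * Real.sqrt s)) *
            (t + (r + 1) * Real.sqrt s / 2) * (f (X t + Real.sqrt s • X' t) - f xs) +
          (1 / 2) * ‖t • X' t + r • (X t - xs)‖ ^ 2)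
      (Set.Ici t₀) ∧
    ∀ t ≥ t₀,
      f (X t + Real.sqrt s • X' t) - f xs ≤
        ((t₀ * (t₀ - r * Real.sqrt s) / (t₀ - (r + 1) * Real.sqrt s)) *
            (t₀ + (r + 1) * Real.sqrt s / 2) * (f (X t₀ + Real.sqrt s • X' t₀) - f xs) +
          (1 / 2) * ‖t₀ • X' t₀ + r • (X t₀ - xs)‖ ^ 2) / t ^ 2 := by
  have hσ : 0 < Real.sqrt s := Real.sqrt_pos.mpr hs
  have hanti : AntitoneOn (energy f xs r (Real.sqrt s) X X') (Ici t₀) :=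
    antitoneOn_Ici_of_forall_hasDerivAt_nonpos fun t ht ↦
      exists_hasDerivAt_energy_nonpos hconv hgrad hmin hσ hr (ht₀ ▸ ht) (hX t ht) (hX' t ht)
        (hode t ht)
  refine ⟨hanti, fun t ht ↦ ?_⟩
  have ht0 : 0 < t := lt_of_lt_of_le (by rw [ht₀]; positivity) ht
  rw [le_div_iff₀ (by positivity), mul_comm]
  exact (sq_mul_le_energy hσ hr (ht₀ ▸ ht) hmin).trans (hanti self_mem_Ici ht ht)

theorem stmt_18 {d : ℕ} (f : EuclideanSpace ℝ (Fin d) → ℝ)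
    (g : EuclideanSpace ℝ (Fin d) → EuclideanSpace ℝ (Fin d))
    (hconv : ConvexOn ℝ Set.univ f)
    (hgrad : ∀ z, HasGradientAt f (g z) z)
    (hcont : Continuous g)
    (xs : EuclideanSpace ℝ (Fin d)) (hmin : ∀ z, f xs ≤ f z)
    (s r : ℝ) (hs : 0 < s) (hr : 2 ≤ r)
    (t₀ : ℝ) (ht₀ : t₀ = (r + 2) * Real.sqrt s)
    (X X' X'' : ℝ → EuclideanSpace ℝ (Fin d))
    (hX : ∀ t ≥ t₀, HasDerivAt X (X' t) t)
    (hX' : ∀ t ≥ t₀, HasDerivAt X' (X'' t) t)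
    (hode : ∀ t ≥ t₀,
      X'' t + ((r + 1) / t) • X' t +
        (1 + (r + 1) * Real.sqrt s / (2 * t)) • g (X t + Real.sqrt s • X' t) = 0) :
    AntitoneOn
      (fun t : ℝ =>
        (t * (t - r * Real.sqrt s) / (t - (r + 1) * Real.sqrt s)) *
            (t + (r + 1) * Real.sqrt s / 2) * (f (X t + Real.sqrt s • X' t) - f xs) +
          (1 / 2) * ‖t • X' t + r • (X t - xs)‖ ^ 2)
      (Set.Ici t₀) ∧
    ∀ t ≥ t₀,
      f (X t + Real.sqrt s • X' t) - f xs ≤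
        ((t₀ * (t₀ - r * Real.sqrt s) / (t₀ - (r + 1) * Real.sqrt s)) *
            (t₀ + (r + 1) * Real.sqrt s / 2) * (f (X t₀ + Real.sqrt s • X' t₀) - f xs) +
          (1 / 2) * ‖t₀ • X' t₀ + r • (X t₀ - xs)‖ ^ 2) / t ^ 2 :=
  stmt_18_general f g hconv hgrad xs hmin s r hs hr t₀ ht₀ X X' X'' hX hX' hode
end
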